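/- Let m ≥ 2 be an integer and let v : ℝ^m ∖ {0} → ℝ^{m³} be the cubic Misawa–Nakauchi map with components v_{ijk}(x) = (1/√((m−1)(m+2)))( δ_{ij} x_k/r + δ_{jk} x_i/r + δ_{ik} x_j/r − (m+2) x_i x_j x_k / r³ ). Then for every x ∈ ℝ^m ∖ {0} and all indices i,j,k, the componentwise Euclidean Laplacian satisfies Δv_{ijk}(x) = −(3(m+1)/r(x)²) v_{ijk}(x). -/

import Mathlib

noncomputable section

open Real MeasureTheory

/-- Partial derivative of `f` in the `a`-th coordinate direction. -/
def pd {m : ℕ} (a : Fin m) (f : EuclideanSpace ℝ (Fin m) → ℝ)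
    (x : EuclideanSpace ℝ (Fin m)) : ℝ :=
  fderiv ℝ f x (EuclideanSpace.single a 1)

/-- Euclidean Laplacian `Δf = Σ_a ∂²f/∂x_a²`. -/
def lap {m : ℕ} (f : EuclideanSpace ℝ (Fin m) → ℝ)
    (x : EuclideanSpace ℝ (Fin m)) : ℝ :=
  ∑ a : Fin m, pd a (pd a f) x

/-- Squared norm of the total derivative: `|∇w|² = Σ_{k,a} (∂_k w_a)²`. -/
def gradSq {m : ℕ} {ι : Type*} [Fintype ι]
    (w : ι → EuclideanSpace ℝ (Fin m) → ℝ) (x : EuclideanSpace ℝ (Fin m)) : ℝ :=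
  ∑ k : Fin m, ∑ a : ι, (pd k (w a) x) ^ 2

/-- The cubic Misawa–Nakauchi map
`v_{ijk}(x) = (1/√((m−1)(m+2)))(δ_{ij}x_k/r + δ_{jk}x_i/r + δ_{ik}x_j/r − (m+2)xᵢxⱼx_k/r³)`. -/
def vMN (m : ℕ) (i j k : Fin m) (x : EuclideanSpace ℝ (Fin m)) : ℝ :=
  (1 / Real.sqrt (((m : ℝ) - 1) * ((m : ℝ) + 2))) *
    ((if i = j then (1 : ℝ) else 0) * x k / ‖x‖
      + (if j = k then (1 : ℝ) else 0) * x i / ‖x‖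
      + (if i = k then (1 : ℝ) else 0) * x j / ‖x‖
      - ((m : ℝ) + 2) * x i * x j * x k / ‖x‖ ^ 3)

/-! `r³ v_{ijk} = c · P` with `P = (δᵢⱼ x_k + δⱼₖ x_i + δᵢₖ x_j) r² - (m + 2) xᵢ xⱼ x_k`, a harmonic
homogeneous cubic: `Δ(xᵢ xⱼ x_k) = 2(δᵢⱼ x_k + δⱼₖ x_i + δᵢₖ x_j)` and `Δ(x_k r²) = (2m + 4) x_k`.
For any harmonic `P` homogeneous of degree `ℓ`, the product rule together with
`Δ rˢ = s(s + m - 2) rˢ⁻²` and Euler's identity `x · ∇P = ℓ P` gives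
`Δ(P rˢ) = s(s + 2ℓ + m - 2) P rˢ⁻²`; for `ℓ = 3`, `s = -3` the factor is `-3(m + 1)`. -/

open Filter Topology

section PartialDerivatives

variable {m : ℕ} {f g : EuclideanSpace ℝ (Fin m) → ℝ} {x : EuclideanSpace ℝ (Fin m)} {a : Fin m}

lemma pd_congr_of_eventuallyEq (h : f =ᶠ[𝓝 x] g) : pd a f x = pd a g x := by
  rw [pd, pd, h.fderiv_eq]

lemma pd_add (hf : DifferentiableAt ℝ f x) (hg : DifferentiableAt ℝ g x) :
    pd a (fun y => f y + g y) x = pd a f x + pd a g x := by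
  simp [pd, fderiv_fun_add hf hg]

lemma pd_sub (hf : DifferentiableAt ℝ f x) (hg : DifferentiableAt ℝ g x) :
    pd a (fun y => f y - g y) x = pd a f x - pd a g x := by
  simp [pd, fderiv_fun_sub hf hg]

lemma pd_const_mul (c : ℝ) (hf : DifferentiableAt ℝ f x) :
    pd a (fun y => c * f y) x = c * pd a f x := by
  simp [pd, fderiv_const_mul hf c]

lemma pd_mul (hf : DifferentiableAt ℝ f x) (hg : DifferentiableAt ℝ g x) :
    pd a (fun y => f y * g y) x = pd a f x * g x + f x * pd a g x := by
  simp only [pd, fderiv_fun_mul hf hg, add_apply, smul_apply, smul_eq_mul]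
  ring

lemma pd_comp {φ : ℝ → ℝ} {φ' : ℝ} (hφ : HasDerivAt φ φ' (f x)) (hf : DifferentiableAt ℝ f x) :
    pd a (fun y => φ (f y)) x = φ' * pd a f x := by
  have h : HasFDerivAt (fun y => φ (f y)) (φ' • fderiv ℝ f x) x :=
    hφ.comp_hasFDerivAt x hf.hasFDerivAt
  simp [pd, h.fderiv]

lemma pd_continuousLinearMap (L : EuclideanSpace ℝ (Fin m) →L[ℝ] ℝ) :
    pd a L = fun _ => L (EuclideanSpace.single a 1) :=
  funext fun _ => by rw [pd, L.fderiv]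

lemma pd_coord (b : Fin m) : pd a (fun y : EuclideanSpace ℝ (Fin m) => y b) x =
    if a = b then 1 else 0 := by
  rw [show (fun y : EuclideanSpace ℝ (Fin m) => y b) = EuclideanSpace.proj b from rfl,
    pd_continuousLinearMap]
  simp [eq_comm]

lemma differentiableAt_coord (b : Fin m) :
    DifferentiableAt ℝ (fun y : EuclideanSpace ℝ (Fin m) => y b) x :=
  (EuclideanSpace.proj (𝕜 := ℝ) b).differentiableAt

lemma pd_norm_sq : pd a (fun y : EuclideanSpace ℝ (Fin m) => ‖y‖ ^ 2) x = 2 * x a := by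
  simp [pd, EuclideanSpace.inner_single_right]

lemma pd_norm (hx : x ≠ 0) : pd a (fun y : EuclideanSpace ℝ (Fin m) => ‖y‖) x = x a / ‖x‖ := by
  have hr : ‖x‖ ≠ 0 := norm_ne_zero_iff.mpr hx
  have h := pd_comp (a := a) (Real.hasDerivAt_sqrt (pow_ne_zero 2 hr))
    (contDiff_norm_sq ℝ (n := 1)).differentiable_one.differentiableAt
  simp only [Real.sqrt_sq (norm_nonneg _), pd_norm_sq] at h
  rw [h]
  field_simp

lemma pd_norm_zpow (s : ℤ) (hx : x ≠ 0) :
    pd a (fun y : EuclideanSpace ℝ (Fin m) => ‖y‖ ^ s) x = s * x a * ‖x‖ ^ (s - 2) := by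
  have hr : ‖x‖ ≠ 0 := norm_ne_zero_iff.mpr hx
  rw [pd_comp (hasDerivAt_zpow s ‖x‖ (Or.inl hr)) ((contDiffAt_norm ℝ hx (n := 1)).differentiableAt
    one_ne_zero), pd_norm hx, zpow_sub₀ hr, zpow_sub₀ hr]
  field_simp

end PartialDerivatives

section Laplacian

variable {m : ℕ} {f g : EuclideanSpace ℝ (Fin m) → ℝ} {x : EuclideanSpace ℝ (Fin m)} {a : Fin m}

lemma ContDiffAt.eventually_differentiableAt (hf : ContDiffAt ℝ 2 f x) :
    ∀ᶠ y in 𝓝 x, DifferentiableAt ℝ f y :=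
  (hf.eventually (by simp)).mono fun _ hy => hy.differentiableAt (by norm_num)

lemma ContDiffAt.differentiableAt_pd (hf : ContDiffAt ℝ 2 f x) :
    DifferentiableAt ℝ (pd a f) x :=
  ((hf.fderiv_right (m := 1) le_rfl).differentiableAt one_ne_zero).clm_apply
    (differentiableAt_const _)

lemma lap_sub (hf : ContDiffAt ℝ 2 f x) (hg : ContDiffAt ℝ 2 g x) :
    lap (fun y => f y - g y) x = lap f x - lap g x := by
  have hpd (a : Fin m) : pd a (fun y => f y - g y) =ᶠ[𝓝 x] fun y => pd a f y - pd a g y := by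
    filter_upwards [hf.eventually_differentiableAt, hg.eventually_differentiableAt] with y hfy hgy
    exact pd_sub hfy hgy
  simp only [lap, pd_congr_of_eventuallyEq (hpd _),
    pd_sub hf.differentiableAt_pd hg.differentiableAt_pd, Finset.sum_sub_distrib]

lemma lap_const_mul (c : ℝ) (hf : ContDiffAt ℝ 2 f x) :
    lap (fun y => c * f y) x = c * lap f x := by
  have hpd (a : Fin m) : pd a (fun y => c * f y) =ᶠ[𝓝 x] fun y => c * pd a f y := by
    filter_upwards [hf.eventually_differentiableAt] with y hfy
    exact pd_const_mul c hfy
  simp only [lap, pd_congr_of_eventuallyEq (hpd _), pd_const_mul c hf.differentiableAt_pd,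
    Finset.mul_sum]

lemma lap_mul (hf : ContDiffAt ℝ 2 f x) (hg : ContDiffAt ℝ 2 g x) :
    lap (fun y => f y * g y) x =
      lap f x * g x + 2 * ∑ a, pd a f x * pd a g x + f x * lap g x := by
  have hpd (a : Fin m) : pd a (fun y => f y * g y) =ᶠ[𝓝 x]
      fun y => pd a f y * g y + f y * pd a g y := by
    filter_upwards [hf.eventually_differentiableAt, hg.eventually_differentiableAt] with y hfy hgy
    exact pd_mul hfy hgy
  have hf' := hf.differentiableAt (by norm_num)
  have hg' := hg.differentiableAt (by norm_num)
  have hfa (a : Fin m) := hf.differentiableAt_pd (a := a)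
  have hga (a : Fin m) := hg.differentiableAt_pd (a := a)
  have hterm (a : Fin m) : pd a (pd a fun y => f y * g y) x =
      pd a (pd a f) x * g x + 2 * (pd a f x * pd a g x) + f x * pd a (pd a g) x := by
    rw [pd_congr_of_eventuallyEq (hpd a), pd_add ((hfa a).fun_mul hg') (hf'.fun_mul (hga a)),
      pd_mul (hfa a) hg', pd_mul hf' (hga a)]
    ring
  simp only [lap, hterm, Finset.sum_add_distrib, ← Finset.mul_sum, ← Finset.sum_mul]

lemma lap_continuousLinearMap (L : EuclideanSpace ℝ (Fin m) →L[ℝ] ℝ) : lap L x = 0 := by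
  simp [lap, pd_continuousLinearMap, pd]

end Laplacian

section Homogeneous

variable {m : ℕ} {f : EuclideanSpace ℝ (Fin m) → ℝ} {x : EuclideanSpace ℝ (Fin m)}

lemma sum_mul_pd_of_homogeneous {ℓ : ℕ} (hf : DifferentiableAt ℝ f x)
    (hhom : ∀ t : ℝ, f (t • x) = t ^ ℓ * f x) : ∑ a, x a * pd a f x = ℓ * f x := by
  have hray : HasDerivAt (fun t : ℝ => f (t • x)) (fderiv ℝ f x x) 1 := by
    have hline : HasDerivAt (fun t : ℝ => t • x) x 1 := by
      simpa using (hasDerivAt_id (1 : ℝ)).smul_const x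
    exact hf.hasFDerivAt.comp_hasDerivAt_of_eq 1 hline (one_smul ℝ x).symm
  have hpow : HasDerivAt (fun t : ℝ => f (t • x)) (ℓ * f x) 1 := by
    simp_rw [hhom]
    simpa using (hasDerivAt_pow ℓ (1 : ℝ)).mul_const (f x)
  have hsum : fderiv ℝ f x x = ∑ a, x a * pd a f x := by
    have hx : ∑ a, x a • EuclideanSpace.single a (1 : ℝ) = x := by
      simpa using (EuclideanSpace.basisFun (Fin m) ℝ).sum_repr x
    calc fderiv ℝ f x x = fderiv ℝ f x (∑ a, x a • EuclideanSpace.single a (1 : ℝ)) := by rw [hx]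
      _ = ∑ a, x a * pd a f x := by simp [pd, map_sum]
  rw [← hsum, hray.unique hpow]

lemma lap_norm_zpow (s : ℤ) (hx : x ≠ 0) :
    lap (fun y : EuclideanSpace ℝ (Fin m) => ‖y‖ ^ s) x = s * (s + m - 2) * ‖x‖ ^ (s - 2) := by
  have hr : ‖x‖ ≠ 0 := norm_ne_zero_iff.mpr hx
  have hpd (a : Fin m) : pd a (fun y : EuclideanSpace ℝ (Fin m) => ‖y‖ ^ s) =ᶠ[𝓝 x]
      fun y => s * (y a * ‖y‖ ^ (s - 2)) := by
    filter_upwards [isOpen_ne.mem_nhds hx] with y hy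
    rw [pd_norm_zpow s hy]
    ring
  have hpow : DifferentiableAt ℝ (fun y : EuclideanSpace ℝ (Fin m) => ‖y‖ ^ (s - 2)) x :=
    ((contDiffAt_norm ℝ hx (n := 1)).differentiableAt one_ne_zero).zpow (Or.inl hr)
  have hterm (a : Fin m) : pd a (pd a fun y => ‖y‖ ^ s) x =
      s * ‖x‖ ^ (s - 2) + s * (s - 2) * ‖x‖ ^ (s - 2 - 2) * x a ^ 2 := by
    rw [pd_congr_of_eventuallyEq (hpd a), pd_const_mul _ ((differentiableAt_coord a).fun_mul hpow),
      pd_mul (differentiableAt_coord a) hpow, pd_coord, if_pos rfl, pd_norm_zpow _ hx]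
    push_cast
    ring
  simp only [lap, hterm, Finset.sum_add_distrib, ← Finset.mul_sum, Finset.sum_const,
    Finset.card_univ, Fintype.card_fin, nsmul_eq_mul, ← EuclideanSpace.real_norm_sq_eq]
  rw [zpow_sub₀ hr (s - 2) 2]
  field_simp
  ring

end Homogeneous

section Eigenfunction

variable {m : ℕ} {P : EuclideanSpace ℝ (Fin m) → ℝ} {x : EuclideanSpace ℝ (Fin m)}

lemma contDiffAt_norm_zpow {n : WithTop ℕ∞} (s : ℤ) (hx : x ≠ 0) :
    ContDiffAt ℝ n (fun y : EuclideanSpace ℝ (Fin m) => ‖y‖ ^ s) x := by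
  have hr : ‖x‖ ≠ 0 := norm_ne_zero_iff.mpr hx
  cases s with
  | ofNat k => simpa using (contDiffAt_norm ℝ hx).pow k
  | negSucc k =>
    simp only [zpow_negSucc]
    exact ((contDiffAt_norm ℝ hx).pow (k + 1)).inv (pow_ne_zero _ hr)

theorem lap_mul_norm_zpow_of_harmonic {ℓ : ℕ} (s : ℤ) (hP : ContDiffAt ℝ 2 P x)
    (hhom : ∀ t : ℝ, P (t • x) = t ^ ℓ * P x) (hharm : lap P x = 0) (hx : x ≠ 0) :
    lap (fun y => P y * ‖y‖ ^ s) x = s * (s + 2 * ℓ + m - 2) / ‖x‖ ^ 2 * (P x * ‖x‖ ^ s) := by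
  have hr : ‖x‖ ≠ 0 := norm_ne_zero_iff.mpr hx
  have hcross : ∑ a, pd a P x * pd a (fun y => ‖y‖ ^ s) x =
      s * ‖x‖ ^ (s - 2) * (ℓ * P x) := by
    rw [← sum_mul_pd_of_homogeneous (hP.differentiableAt (by norm_num)) hhom, Finset.mul_sum]
    refine Finset.sum_congr rfl fun a _ => ?_
    rw [pd_norm_zpow s hx]
    ring
  rw [lap_mul hP (contDiffAt_norm_zpow s hx), hharm, hcross, lap_norm_zpow s hx,
    zpow_sub₀ hr]
  field_simp
  ring

end Eigenfunction

section MisawaNakauchi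

variable {m : ℕ} {x : EuclideanSpace ℝ (Fin m)}

def mnTrace (m : ℕ) (i j k : Fin m) : EuclideanSpace ℝ (Fin m) →L[ℝ] ℝ :=
  (if i = j then (1 : ℝ) else 0) • EuclideanSpace.proj k
    + (if j = k then (1 : ℝ) else 0) • EuclideanSpace.proj i
    + (if i = k then (1 : ℝ) else 0) • EuclideanSpace.proj j

def mnCubic (m : ℕ) (i j k : Fin m) (y : EuclideanSpace ℝ (Fin m)) : ℝ :=
  mnTrace m i j k y * ‖y‖ ^ 2 - ((m : ℝ) + 2) * (y i * (y j * y k))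

lemma mnTrace_apply (i j k : Fin m) (y : EuclideanSpace ℝ (Fin m)) :
    mnTrace m i j k y = (if i = j then (1 : ℝ) else 0) * y k
      + (if j = k then (1 : ℝ) else 0) * y i + (if i = k then (1 : ℝ) else 0) * y j :=
  rfl

lemma contDiff_coord {n : WithTop ℕ∞} (a : Fin m) :
    ContDiff ℝ n (fun y : EuclideanSpace ℝ (Fin m) => y a) :=
  (EuclideanSpace.proj (𝕜 := ℝ) a).contDiff

lemma contDiff_mnCubic {n : WithTop ℕ∞} (i j k : Fin m) : ContDiff ℝ n (mnCubic m i j k) :=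
  ((mnTrace m i j k).contDiff.mul (contDiff_norm_sq ℝ)).sub
    (contDiff_const.mul ((contDiff_coord i).mul ((contDiff_coord j).mul (contDiff_coord k))))

lemma mnCubic_smul (i j k : Fin m) (t : ℝ) (y : EuclideanSpace ℝ (Fin m)) :
    mnCubic m i j k (t • y) = t ^ 3 * mnCubic m i j k y := by
  simp only [mnCubic, map_smul, norm_smul, PiLp.smul_apply, smul_eq_mul, mul_pow, Real.norm_eq_abs,
    sq_abs]
  ring

lemma lap_coord (a : Fin m) : lap (fun y : EuclideanSpace ℝ (Fin m) => y a) x = 0 :=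
  lap_continuousLinearMap (EuclideanSpace.proj a)

lemma lap_coord_mul_coord (j k : Fin m) :
    lap (fun y : EuclideanSpace ℝ (Fin m) => y j * y k) x = 2 * if j = k then 1 else 0 := by
  rw [lap_mul (contDiff_coord j).contDiffAt (contDiff_coord k).contDiffAt]
  simp [lap_coord, pd_coord, eq_comm]

lemma lap_coord_mul_coord_mul_coord (i j k : Fin m) :
    lap (fun y : EuclideanSpace ℝ (Fin m) => y i * (y j * y k)) x = 2 * mnTrace m i j k x := by
  have hjk := (contDiff_coord (n := 2) j).mul (contDiff_coord k)
  rw [lap_mul (contDiff_coord i).contDiffAt hjk.contDiffAt, lap_coord, lap_coord_mul_coord,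
    mnTrace_apply]
  simp only [zero_mul, pd_coord, pd_mul (differentiableAt_coord j) (differentiableAt_coord k),
    ite_mul, one_mul, mul_ite, mul_one, mul_zero, Finset.sum_ite_eq', Finset.mem_univ, ↓reduceIte,
    zero_add]
  split_ifs <;> ring

lemma lap_norm_sq : lap (fun y : EuclideanSpace ℝ (Fin m) => ‖y‖ ^ 2) x = 2 * m := by
  have hpd (a : Fin m) : pd a (fun y : EuclideanSpace ℝ (Fin m) => ‖y‖ ^ 2) = fun y => 2 * y a :=
    funext fun _ => pd_norm_sq
  simp [lap, hpd, pd_const_mul _ (differentiableAt_coord _), pd_coord, mul_comm]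

lemma lap_mnTrace_mul_norm_sq (i j k : Fin m) :
    lap (fun y => mnTrace m i j k y * ‖y‖ ^ 2) x = 2 * ((m : ℝ) + 2) * mnTrace m i j k x := by
  have hL := (mnTrace m i j k).contDiff (n := 2)
  have heuler := sum_mul_pd_of_homogeneous (ℓ := 1) (x := x) (mnTrace m i j k).differentiableAt
    (fun t => by simp)
  rw [lap_mul hL.contDiffAt (contDiff_norm_sq ℝ).contDiffAt, lap_continuousLinearMap, lap_norm_sq]
  have hcross : ∑ a, pd a (mnTrace m i j k) x * pd a (fun y => ‖y‖ ^ 2) x =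
      2 * ∑ a, x a * pd a (mnTrace m i j k) x := by
    simp only [pd_norm_sq, Finset.mul_sum]
    exact Finset.sum_congr rfl fun _ _ => by ring
  rw [hcross, heuler]
  push_cast
  ring

lemma lap_mnCubic (i j k : Fin m) : lap (mnCubic m i j k) x = 0 := by
  have hL := (mnTrace m i j k).contDiff (n := 2)
  have hijk := (contDiff_coord (n := 2) i).mul ((contDiff_coord j).mul (contDiff_coord k))
  unfold mnCubic
  rw [lap_sub (hL.mul (contDiff_norm_sq ℝ)).contDiffAt
      (contDiff_const.mul hijk).contDiffAt, lap_const_mul _ hijk.contDiffAt,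
    lap_mnTrace_mul_norm_sq, lap_coord_mul_coord_mul_coord]
  ring

end MisawaNakauchi

lemma vMN_eq_mnCubic_mul_norm_zpow (m : ℕ) (i j k : Fin m) :
    vMN m i j k = fun y => 1 / √(((m : ℝ) - 1) * ((m : ℝ) + 2)) *
      (mnCubic m i j k y * ‖y‖ ^ (-3 : ℤ)) := by
  funext y
  rcases eq_or_ne y 0 with rfl | hy
  · simp [vMN]
  · have hr : ‖y‖ ≠ 0 := norm_ne_zero_iff.mpr hy
    rw [vMN, mnCubic, mnTrace_apply, zpow_neg, zpow_ofNat]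
    field_simp

theorem stmt13_general (m : ℕ) (x : EuclideanSpace ℝ (Fin m)) (hx : x ≠ 0)
    (i j k : Fin m) :
    lap (vMN m i j k) x = -(3 * ((m : ℝ) + 1) / ‖x‖ ^ 2) * vMN m i j k x := by
  have hcubic := (contDiff_mnCubic (n := 2) i j k).contDiffAt (x := x)
  rw [vMN_eq_mnCubic_mul_norm_zpow, lap_const_mul _ (hcubic.mul (contDiffAt_norm_zpow _ hx)),
    lap_mul_norm_zpow_of_harmonic (ℓ := 3) (-3) hcubic (fun t => mnCubic_smul i j k t x)
      (lap_mnCubic i j k) hx]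
  push_cast
  ring

theorem stmt13 (m : ℕ) (hm : 2 ≤ m) (x : EuclideanSpace ℝ (Fin m)) (hx : x ≠ 0)
    (i j k : Fin m) :
    lap (vMN m i j k) x = -(3 * ((m : ℝ) + 1) / ‖x‖ ^ 2) * vMN m i j k x :=
  stmt13_general m x hx i j k
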